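/- The function f(x) = sqrt(c/(2π x³)) exp(−c/(2x)) for x > 0 (and 0 for x ≤ 0), with c > 0, is a probability density function: it is nonnegative and integrates to 1 over the real line. -/

import Mathlib

/-!
Substituting `x = 1 / t` turns the Lévy density into `√(c / 2π) · t^(-1/2) e^(-c t / 2)` on
`(0, ∞)`, a Gamma density of shape `1/2`, whose integral is `√(c / 2π) · Γ(1/2) / √(c / 2) = 1`
since `Γ(1/2) = √π`.
-/

open MeasureTheory Set Real

/-- The Lévy density with location 0 and scale `c`. -/
noncomputable def levyPDF (c x : ℝ) : ℝ :=
  if 0 < x then Real.sqrt (c / (2 * Real.pi * x ^ 3)) * Real.exp (-c / (2 * x)) else 0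

theorem levyPDF_nonneg (c x : ℝ) : 0 ≤ levyPDF c x := by
  unfold levyPDF
  split <;> positivity

theorem levyPDF_eq_indicator (c : ℝ) :
    levyPDF c = (Ioi 0).indicator fun x => √(c / (2 * π * x ^ 3)) * exp (-c / (2 * x)) := by
  ext x
  simp only [levyPDF, indicator_apply, mem_Ioi]

theorem integral_Ioi_inv_sq_smul_comp_inv {E : Type*} [NormedAddCommGroup E] [NormedSpace ℝ E]
    (g : ℝ → E) : ∫ x in Ioi 0, (x ^ 2)⁻¹ • g x⁻¹ = ∫ y in Ioi 0, g y := by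
  rw [← integral_comp_rpow_Ioi g (p := -1) (by norm_num)]
  refine setIntegral_congr_fun measurableSet_Ioi fun x hx => ?_
  rw [abs_neg, abs_one, one_mul, rpow_neg_one, show (-1 : ℝ) - 1 = -(2 : ℕ) by norm_num,
    rpow_neg (le_of_lt hx), rpow_natCast]

theorem levy_density_comp_inv (c : ℝ) {x : ℝ} (hx : 0 < x) :
    (x ^ 2)⁻¹ • (√(c / (2 * π * x⁻¹ ^ 3)) * exp (-c / (2 * x⁻¹))) =
      √(c / (2 * π)) * (x ^ ((1 : ℝ) / 2 - 1) * exp (-(c / 2 * x))) := by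
  have hsqrt : √(c / (2 * π * x⁻¹ ^ 3)) = √(c / (2 * π)) * x ^ ((3 : ℝ) / 2) := by
    rw [show c / (2 * π * x⁻¹ ^ 3) = c / (2 * π) * x ^ 3 by field_simp,
      sqrt_mul' _ (by positivity), sqrt_eq_rpow (x ^ 3), ← rpow_natCast, ← rpow_mul hx.le]
    norm_num
  rw [smul_eq_mul, hsqrt, show -c / (2 * x⁻¹) = -(c / 2 * x) by field_simp,
    show (1 : ℝ) / 2 - 1 = -(2 : ℕ) + 3 / 2 by norm_num, rpow_add hx, rpow_neg hx.le,
    rpow_natCast]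
  ring

theorem integral_rpow_neg_half_mul_exp_neg_mul_Ioi {r : ℝ} (hr : 0 < r) :
    ∫ t in Ioi 0, t ^ ((1 : ℝ) / 2 - 1) * exp (-(r * t)) = √(π / r) := by
  rw [integral_rpow_mul_exp_neg_mul_Ioi one_half_pos hr, Gamma_one_half_eq, ← sqrt_eq_rpow,
    ← sqrt_mul (by positivity), one_div_mul_eq_div]

theorem integral_levyPDF {c : ℝ} (hc : 0 < c) : ∫ x, levyPDF c x = 1 := by
  rw [levyPDF_eq_indicator, integral_indicator measurableSet_Ioi,
    ← integral_Ioi_inv_sq_smul_comp_inv,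
    setIntegral_congr_fun measurableSet_Ioi fun x hx => levy_density_comp_inv c hx,
    integral_const_mul, integral_rpow_neg_half_mul_exp_neg_mul_Ioi (by positivity),
    ← sqrt_mul (by positivity), ← sqrt_one]
  congr 1
  field_simp

theorem stmt_4 (c : ℝ) (hc : 0 < c) :
    (∀ x : ℝ, 0 ≤ levyPDF c x) ∧ (∫ x : ℝ, levyPDF c x) = 1 :=
  ⟨levyPDF_nonneg c, integral_levyPDF hc⟩
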